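/- arXiv:1902.00196 — 2 statements merged into one kernel-verified Lean document; each statement's English description precedes it below -/
import Mathlib

section
/- Let F : CohI → CohI be a normal functor and ⟨X⁰⟩x ∈ NF(F) a normal form, with d = Card|X⁰|. For n ∈ ℕ, let [n] denote the coherence space with an n-element web in which all points are pairwise coherent. Then Card|F(X⁰ ⊗ [n])| ≥ n^d. -/
open CategoryTheory Limits

/-- A coherence space: a web together with a reflexive symmetric coherence relation. -/
structure CohSpace : Type 1 where
  web : Type
  coh : web → web → Prop
  refl : ∀ x, coh x x
  symm : ∀ {x y}, coh x y → coh y x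

/-- An embedding of coherence spaces: an injection preserving and reflecting coherence. -/
@[ext]
structure CohEmb (X Y : CohSpace) : Type where
  toFun : X.web → Y.web
  inj : Function.Injective toFun
  coh_iff : ∀ x x', X.coh x x' ↔ Y.coh (toFun x) (toFun x')

/-- The category `CohI` of coherence spaces and embeddings. -/
instance : Category CohSpace where
  Hom := CohEmb
  id X := ⟨id, fun _ _ h => h, fun _ _ => Iff.rfl⟩
  comp f g := ⟨g.toFun ∘ f.toFun, g.inj.comp f.inj,
    fun x x' => (f.coh_iff x x').trans (g.coh_iff _ _)⟩
  id_comp _ := rfl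
  comp_id _ := rfl
  assoc _ _ _ := rfl

/-- A clique: a set of pairwise coherent points. -/
def CohSpace.IsClique (X : CohSpace) (c : Set X.web) : Prop :=
  ∀ ⦃x⦄, x ∈ c → ∀ ⦃y⦄, y ∈ c → X.coh x y

/-- Linear negation (dual) of a coherence space. -/
def CohSpace.dual (X : CohSpace) : CohSpace where
  web := X.web
  coh x y := x = y ∨ ¬ X.coh x y
  refl _ := Or.inl rfl
  symm h := h.elim (fun h' => Or.inl h'.symm) (fun h' => Or.inr fun hc => h' (X.symm hc))

/-- Tensor product of coherence spaces. -/
def CohSpace.tens (X Y : CohSpace) : CohSpace where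
  web := X.web × Y.web
  coh p q := X.coh p.1 q.1 ∧ Y.coh p.2 q.2
  refl p := ⟨X.refl p.1, Y.refl p.2⟩
  symm h := ⟨X.symm h.1, Y.symm h.2⟩

/-- Direct sum (`⊕`) of coherence spaces. -/
def CohSpace.sum (X Y : CohSpace) : CohSpace where
  web := X.web ⊕ Y.web
  coh := Sum.LiftRel X.coh Y.coh
  refl x := by cases x with
    | inl a => exact Sum.LiftRel.inl (X.refl a)
    | inr b => exact Sum.LiftRel.inr (Y.refl b)
  symm h := by cases h with
    | inl h => exact Sum.LiftRel.inl (X.symm h)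
    | inr h => exact Sum.LiftRel.inr (Y.symm h)

/-- Linear implication `X ⊸ Y := (X ⊗ Y^⊥)^⊥`. -/
def CohSpace.lolly (X Y : CohSpace) : CohSpace := (X.tens Y.dual).dual

/-- The with connective `X & Y := (X^⊥ ⊕ Y^⊥)^⊥`. -/
def CohSpace.withc (X Y : CohSpace) : CohSpace := (X.dual.sum Y.dual).dual

/-- The one-point coherence space (interpretation of `1` and `⊥`). -/
def oneCoh : CohSpace where
  web := PUnit
  coh _ _ := True
  refl _ := trivial
  symm _ := trivial

/-- The empty coherence space (interpretation of `0` and `⊤`). -/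
def topCoh : CohSpace where
  web := Empty
  coh x _ := x.elim
  refl x := x.elim
  symm {x} _ := x.elim

/-- The induced embedding between duals. -/
def CohEmb.dualMap {X Y : CohSpace} (f : X ⟶ Y) : X.dual ⟶ Y.dual where
  toFun := f.toFun
  inj := f.inj
  coh_iff x x' := by
    constructor
    · rintro (rfl | h)
      · exact Or.inl rfl
      · exact Or.inr fun hc => h ((f.coh_iff _ _).2 hc)
    · rintro (h | h)
      · exact Or.inl (f.inj h)
      · exact Or.inr fun hc => h ((f.coh_iff _ _).1 hc)

/-- The induced embedding between tensor products. -/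
def CohEmb.tensMap {X X' Y Y' : CohSpace} (f : X ⟶ X') (g : Y ⟶ Y') :
    X.tens Y ⟶ X'.tens Y' where
  toFun := Prod.map f.toFun g.toFun
  inj := f.inj.prodMap g.inj
  coh_iff p q := and_congr (f.coh_iff _ _) (g.coh_iff _ _)

/-- The induced embedding between direct sums. -/
def CohEmb.sumMap {X X' Y Y' : CohSpace} (f : X ⟶ X') (g : Y ⟶ Y') :
    X.sum Y ⟶ X'.sum Y' where
  toFun := Sum.map f.toFun g.toFun
  inj := f.inj.sumMap g.inj
  coh_iff x x' := by
    constructor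
    · intro h
      cases h with
      | inl h => exact Sum.LiftRel.inl ((f.coh_iff _ _).1 h)
      | inr h => exact Sum.LiftRel.inr ((g.coh_iff _ _).1 h)
    · intro h
      cases x with
      | inl a => cases x' with
        | inl a' => exact Sum.LiftRel.inl ((f.coh_iff _ _).2 (by cases h; assumption))
        | inr b' => exact absurd h (by intro hh; cases hh)
      | inr b => cases x' with
        | inl a' => exact absurd h (by intro hh; cases hh)
        | inr b' => exact Sum.LiftRel.inr ((g.coh_iff _ _).2 (by cases h; assumption))

/-- Linear negation as a covariant endofunctor of `CohI`. -/
def dualFunctor : CohSpace ⥤ CohSpace where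
  obj := CohSpace.dual
  map := CohEmb.dualMap
  map_id _ := rfl
  map_comp _ _ := rfl

/-- Tensor as a functor on the product category. -/
def tensorFunctor : CohSpace × CohSpace ⥤ CohSpace where
  obj p := p.1.tens p.2
  map f := CohEmb.tensMap f.1 f.2
  map_id _ := rfl
  map_comp _ _ := rfl

/-- Sum as a functor on the product category. -/
def sumFunctor : CohSpace × CohSpace ⥤ CohSpace where
  obj p := p.1.sum p.2
  map f := CohEmb.sumMap f.1 f.2
  map_id p := by
    apply CohEmb.ext
    funext x
    cases x <;> rfl
  map_comp f g := by
    apply CohEmb.ext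
    funext x
    cases x <;> rfl

/-- The category `CohI^n`. -/
abbrev CohTuple (n : ℕ) := Fin n → CohSpace

/-- A normal functor: one preserving filtered colimits and finite pullbacks. -/
def IsNormalFunctor {C : Type*} {D : Type*} [Category C] [Category D] (F : C ⥤ D) : Prop :=
  PreservesFilteredColimits F ∧ PreservesLimitsOfShape WalkingCospan F

/-- The web functor `CohI ⥤ Set`. -/
def webF : CohSpace ⥤ Type where
  obj X := X.web
  map f := TypeCat.ofHom f.toFun
  map_id _ := rfl
  map_comp _ _ := rfl

/-- The category of elements of the web presheaf `|F|` of `F : CohI^n ⥤ CohI`. -/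
abbrev Elts {n : ℕ} (F : CohTuple n ⥤ CohSpace) := (F ⋙ webF).Elements

/-- `(X⃗, x)` is a normal form of `F`: its webs are finite and it is initial in its own
slice category of `El(|F|)`. -/
def IsNormalForm {n : ℕ} {F : CohTuple n ⥤ CohSpace} (e : Elts F) : Prop :=
  (∀ i, Finite (e.1 i).web) ∧
    ∀ (f : Elts F) (u : f ⟶ e), ∃! v : e ⟶ f, v ≫ u = 𝟙 e

/-- The pointwise dual functor `F^⊥`. -/
def dualF {n : ℕ} (F : CohTuple n ⥤ CohSpace) : CohTuple n ⥤ CohSpace := F ⋙ dualFunctor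

/-- The pointwise tensor functor `F ⊗ G`. -/
def tensF {n : ℕ} (F G : CohTuple n ⥤ CohSpace) : CohTuple n ⥤ CohSpace :=
  F.prod' G ⋙ tensorFunctor

/-- The pointwise sum functor `F ⊕ G`. -/
def sumF {n : ℕ} (F G : CohTuple n ⥤ CohSpace) : CohTuple n ⥤ CohSpace :=
  F.prod' G ⋙ sumFunctor

/-- The pointwise linear implication functor `F ⊸ G`. -/
def lollyF {n : ℕ} (F G : CohTuple n ⥤ CohSpace) : CohTuple n ⥤ CohSpace :=
  dualF (tensF F (dualF G))

/-- The degree of a normal functor: the supremum of the cardinalities of the webs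
occurring in its normal forms. -/
noncomputable def degree {n : ℕ} (F : CohTuple n ⥤ CohSpace) : ℕ∞ :=
  ⨆ (e : Elts F) (_ : IsNormalForm e) (i : Fin n), (Nat.card (e.1 i).web : ℕ∞)

/-- `F` sends coherence spaces with finite webs to coherence spaces with finite webs. -/
def PreservesFiniteWebs {n : ℕ} (F : CohTuple n ⥤ CohSpace) : Prop :=
  ∀ X : CohTuple n, (∀ i, Finite (X i).web) → Finite (F.obj X).web

/-- A finite normal functor: one preserving finiteness of webs and of finite degree. -/
def IsFiniteFunctor {n : ℕ} (F : CohTuple n ⥤ CohSpace) : Prop :=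
  PreservesFiniteWebs F ∧ degree F < ⊤

/-- `NF(F)`: the set of isomorphism classes of normal forms of `F`. -/
def NFSet {n : ℕ} (F : CohTuple n ⥤ CohSpace) :
    Set (Quotient (isIsomorphicSetoid (Elts F))) :=
  { q | ∃ e : Elts F, IsNormalForm e ∧ Quotient.mk _ e = q }

/-- A uniform family of cliques of `F : CohI^n ⥤ CohI`. -/
def IsUniformFamily {n : ℕ} (F : CohTuple n ⥤ CohSpace)
    (c : ∀ X : CohTuple n, Set (F.obj X).web) : Prop :=
  (∀ X, (F.obj X).IsClique (c X)) ∧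
    ∀ (X Y : CohTuple n) (ι : X ⟶ Y), c X = (F.map ι).toFun ⁻¹' c Y

/-- Coherence of two normal forms: all their instantiations along embeddings into a
common tuple are coherent. -/
def NFCoherent {n : ℕ} {F : CohTuple n ⥤ CohSpace} (e e' : Elts F) : Prop :=
  ∀ (Z : CohTuple n) (ι : e.1 ⟶ Z) (κ : e'.1 ⟶ Z),
    (F.obj Z).coh ((F.map ι).toFun e.2) ((F.map κ).toFun e'.2)

/-- A coherence space structure on a canonical finite web `Fin k`. -/
structure FinCohData where
  k : ℕ
  r : Fin k → Fin k → Prop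
  refl : ∀ i, r i i
  symm : ∀ {i j}, r i j → r j i

/-- The coherence space associated to a `FinCohData`. -/
def FinCohData.toCoh (d : FinCohData) : CohSpace where
  web := Fin d.k
  coh := d.r
  refl := d.refl
  symm := d.symm

/-- A canonical tuple of finite coherence spaces. -/
def canonTuple {n : ℕ} (d : Fin n → FinCohData) : CohTuple n := fun i => (d i).toCoh

/-- Self-coherent normal forms of `F` carried by canonical tuples of finite coherence
spaces; the web of the trace is the set of their isomorphism classes. -/
def CanonNF {n : ℕ} (F : CohTuple n ⥤ CohSpace) : Type :=
  Σ d : Fin n → FinCohData,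
    { x : (F.obj (canonTuple d)).web //
        IsNormalForm (F := F) ⟨canonTuple d, x⟩ ∧
          NFCoherent (F := F) ⟨canonTuple d, x⟩ ⟨canonTuple d, x⟩ }

/-- The element of `El(|F|)` carried by a canonical normal form. -/
def CanonNF.toElts {n : ℕ} {F : CohTuple n ⥤ CohSpace} (c : CanonNF F) : Elts F :=
  ⟨canonTuple c.1, c.2.1⟩

/-- Canonical normal forms are identified when isomorphic in `El(|F|)`. -/
def traceSetoid {n : ℕ} (F : CohTuple n ⥤ CohSpace) : Setoid (CanonNF F) :=
  (isIsomorphicSetoid (Elts F)).comap CanonNF.toElts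

/-- The trace `Tr(F)`: isomorphism classes of self-coherent normal forms, with the
coherence relation between normal forms. -/
def Tr {n : ℕ} (F : CohTuple n ⥤ CohSpace) : CohSpace where
  web := Quotient (traceSetoid F)
  coh q q' := ∃ c c' : CanonNF F,
    Quotient.mk (traceSetoid F) c = q ∧ Quotient.mk (traceSetoid F) c' = q' ∧
      NFCoherent c.toElts c'.toElts
  refl q := by
    obtain ⟨c, rfl⟩ := Quotient.exists_rep q
    exact ⟨c, c, rfl, rfl, c.2.2.2⟩
  symm h := by
    obtain ⟨c, c', h1, h2, h3⟩ := h
    exact ⟨c', c, h2, h1, fun Z ι κ => (F.obj Z).symm (h3 Z κ ι)⟩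

-- STATEMENT 14
/-- The coherence space `[n]` with `n` pairwise coherent points. -/
def fullCoh (n : ℕ) : CohSpace where
  web := Fin n
  coh _ _ := True
  refl _ := trivial
  symm _ := trivial

/-! Each `g : |X⁰| → [n]` gives an embedding `ι_g : X⁰ ↪ X⁰ ⊗ [n]`, `a ↦ (a, g a)`, hence a
point `F(ι_g)(x)`. The pullback of `ι_g` and `ι_h` is the subspace of `X⁰` on which `g = h`. As `F`
preserves it, `F(ι_g)(x) = F(ι_h)(x)` means that `x` lies in the image of that subspace, and
initiality of the normal form makes its inclusion split, so `g = h`. Thus `g ↦ F(ι_g)(x)` is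
injective, and the same works for normal forms of any arity. -/

namespace CohSpace

def restrict (X : CohSpace) (S : Set X.web) : CohSpace where
  web := S
  coh p q := X.coh p q
  refl p := X.refl p
  symm h := X.symm h

def restrictIncl (X : CohSpace) (S : Set X.web) : X.restrict S ⟶ X where
  toFun := Subtype.val
  inj := Subtype.val_injective
  coh_iff _ _ := Iff.rfl

def codRestrict {X Y : CohSpace} (f : Y ⟶ X) (S : Set X.web) (hf : ∀ y, f.toFun y ∈ S) :
    Y ⟶ X.restrict S where
  toFun y := ⟨f.toFun y, hf y⟩
  inj _ _ h := f.inj (congrArg Subtype.val h)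
  coh_iff := f.coh_iff

def graphEmb (X : CohSpace) {n : ℕ} (g : X.web → Fin n) : X ⟶ X.tens (fullCoh n) where
  toFun a := (a, g a)
  inj _ _ h := (Prod.ext_iff.1 h).1
  coh_iff _ _ := (and_iff_left trivial).symm

/-- Points of `W` are embeddings `oneCoh ⟶ W`, so the pullback property can be tested on single
points. -/
theorem exists_of_isPullback {P X Y Z : CohSpace} {fst : P ⟶ X} {snd : P ⟶ Y}
    {f : X ⟶ Z} {g : Y ⟶ Z} (hP : IsPullback fst snd f g) {x : X.web} {y : Y.web}
    (hxy : f.toFun x = g.toFun y) : ∃ p, fst.toFun p = x ∧ snd.toFun p = y := by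
  let point : ∀ {W : CohSpace}, W.web → (oneCoh ⟶ W) := fun {W} w =>
    { toFun := fun _ => w
      inj := fun _ _ _ => rfl
      coh_iff := fun _ _ => iff_of_true trivial (W.refl w) }
  have hw : point x ≫ f = point y ≫ g := CohEmb.ext (funext fun _ => hxy)
  refine ⟨(hP.lift _ _ hw).toFun PUnit.unit, ?_, ?_⟩
  · exact congrFun (congrArg CohEmb.toFun (hP.lift_fst _ _ hw)) PUnit.unit
  · exact congrFun (congrArg CohEmb.toFun (hP.lift_snd _ _ hw)) PUnit.unit

end CohSpace

section Tuple

variable {k n : ℕ} (X : CohTuple k)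

def graphHom (g : ∀ i, (X i).web → Fin n) : X ⟶ fun i => (X i).tens (fullCoh n) :=
  fun i => (X i).graphEmb (g i)

def eqLocus (g h : ∀ i, (X i).web → Fin n) : CohTuple k :=
  fun i => (X i).restrict {a | g i a = h i a}

def eqLocusIncl (g h : ∀ i, (X i).web → Fin n) : eqLocus X g h ⟶ X :=
  fun i => (X i).restrictIncl _

theorem isPullback_eqLocusIncl_graphHom (g h : ∀ i, (X i).web → Fin n) :
    IsPullback (eqLocusIncl X g h) (eqLocusIncl X g h) (graphHom X g) (graphHom X h) := by
  have comm : eqLocusIncl X g h ≫ graphHom X g = eqLocusIncl X g h ≫ graphHom X h := by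
    funext i
    exact CohEmb.ext (funext fun a => Prod.ext rfl a.2)
  have hcone (s : PullbackCone (graphHom X g) (graphHom X h)) (i : Fin k) (p : (s.pt i).web) :
      (s.fst i).toFun p = (s.snd i).toFun p ∧
        g i ((s.fst i).toFun p) = h i ((s.fst i).toFun p) := by
    have hp := Prod.ext_iff.1 (congrFun (congrArg CohEmb.toFun (congrFun s.condition i)) p)
    exact ⟨hp.1, hp.2.trans (congrArg (h i) hp.1.symm)⟩
  refine IsPullback.of_isLimit' ⟨comm⟩ (PullbackCone.IsLimit.mk comm
    (fun s i => CohSpace.codRestrict (s.fst i) _ fun p => (hcone s i p).2) (fun _ => rfl)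
    (fun s => funext fun i => CohEmb.ext (funext fun p => (hcone s i p).1))
    (fun s m hm _ => funext fun i => CohEmb.ext (funext fun p =>
      Subtype.ext (congrFun (congrArg CohEmb.toFun (congrFun hm i)) p))))

end Tuple

theorem IsNormalForm.exists_section {k : ℕ} {F : CohTuple k ⥤ CohSpace} {e : Elts F}
    (he : IsNormalForm e) {A : CohTuple k} (m : A ⟶ e.1) (z : (F.obj A).web)
    (hz : (F.map m).toFun z = e.2) : ∃ s : e.1 ⟶ A, s ≫ m = 𝟙 e.1 := by
  obtain ⟨v, hv, -⟩ := he.2 ⟨A, z⟩ ⟨m, hz⟩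
  exact ⟨v.1, congrArg Subtype.val hv⟩

theorem IsNormalForm.injective_map_graphHom {k : ℕ} {F : CohTuple k ⥤ CohSpace}
    [PreservesLimitsOfShape WalkingCospan F] {e : Elts F} (he : IsNormalForm e) (n : ℕ) :
    Function.Injective fun g : (∀ i, (e.1 i).web → Fin n) =>
      (F.map (graphHom e.1 g)).toFun e.2 := by
  intro g h hgh
  obtain ⟨z, hz, -⟩ :=
    CohSpace.exists_of_isPullback ((isPullback_eqLocusIncl_graphHom e.1 g h).map F) hgh
  obtain ⟨s, hs⟩ := he.exists_section _ z hz
  funext i a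
  have hsa : ((s i).toFun a).1 = a := congrFun (congrArg CohEmb.toFun (congrFun hs i)) a
  simpa only [hsa, Set.mem_ofPred_eq] using ((s i).toFun a).2

theorem stmt14 (F : CohTuple 1 ⥤ CohSpace) (hF : IsNormalFunctor F)
    (e : Elts F) (he : IsNormalForm e) (n : ℕ) :
    ((n ^ Nat.card (e.1 0).web : ℕ) : Cardinal) ≤
      Cardinal.mk (F.obj (fun _ => (e.1 0).tens (fullCoh n))).web := by
  have : ∀ i, Finite (e.1 i).web := he.1
  have : PreservesLimitsOfShape WalkingCospan F := hF.2
  have hX : (fun i => (e.1 i).tens (fullCoh n)) = fun _ : Fin 1 => (e.1 0).tens (fullCoh n) := by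
    funext i
    rw [Fin.fin_one_eq_zero i]
  calc ((n ^ Nat.card (e.1 0).web : ℕ) : Cardinal)
      = Nat.card (∀ i, (e.1 i).web → Fin n) := by
        rw [Nat.card_congr (Equiv.piUnique _), Nat.card_fun, Nat.card_fin]; rfl
    _ = Cardinal.mk (∀ i, (e.1 i).web → Fin n) := Nat.cast_card
    _ ≤ Cardinal.mk (F.obj fun i => (e.1 i).tens (fullCoh n)).web :=
        Cardinal.mk_le_of_injective (he.injective_map_graphHom n)
    _ = _ := by rw [hX]
end

section
/- Let F : CohI^{n+1} → CohI be a normal functor. If ⟨Y₁,…,Yₙ⟩⟨X⟩x ∈ NF(∀(F)), where ⟨X⟩x is a point of the web of Tr(F(Y⃗,−)), i.e. a self-coherent normal form of the normal functor F(Y₁,…,Yₙ,−) : CohI → CohI, then ⟨Y₁,…,Yₙ,X⟩x ∈ NF(F). -/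
open CategoryTheory Limits

/-- The family of functors whose pointwise pairing computes `Z ↦ (X₁,…,Xₙ,Z)`. -/
def gfam {n : ℕ} (X : CohTuple n) (i : Fin (n + 1)) : CohTuple 1 ⥤ CohSpace :=
  if h : (i : ℕ) < n then (Functor.const (CohTuple 1)).obj (X ⟨i, h⟩)
  else Pi.eval (fun _ : Fin 1 => CohSpace) 0

/-- The partial application `F(X₁,…,Xₙ,−)` of `F : CohI^(n+1) ⥤ CohI`. -/
def partialApp {n : ℕ} (F : CohTuple (n + 1) ⥤ CohSpace) (X : CohTuple n) :
    CohTuple 1 ⥤ CohSpace :=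
  Functor.pi' (gfam X) ⋙ F

/-- The embedding `(X⃗, Z) ↪ (Y⃗, Z)` induced componentwise by `ι : X⃗ ↪ Y⃗`. -/
def extHom {n : ℕ} {X Y : CohTuple n} (ι : X ⟶ Y) (Z : CohTuple 1) (i : Fin (n + 1)) :
    (gfam X i).obj Z ⟶ (gfam Y i).obj Z := by
  by_cases h : (i : ℕ) < n
  · simp only [gfam, dif_pos h]
    exact ι ⟨i, h⟩
  · simp only [gfam, dif_neg h]
    exact 𝟙 (Z 0)

/-- The embedding `extHom` as a morphism in `CohI^(n+1)`. -/
def extHomPi {n : ℕ} {X Y : CohTuple n} (ι : X ⟶ Y) (Z : CohTuple 1) :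
    (Functor.pi' (gfam X)).obj Z ⟶ (Functor.pi' (gfam Y)).obj Z :=
  fun i => extHom ι Z i

/-- Transport along an object equality `G.obj X = Tr (partialApp F X)`. -/
def trWebCast {n : ℕ} {F : CohTuple (n + 1) ⥤ CohSpace} {G : CohTuple n ⥤ CohSpace}
    (h : ∀ X, G.obj X = Tr (partialApp F X)) (X : CohTuple n) :
    (Tr (partialApp F X)).web → (G.obj X).web :=
  fun q => cast (congrArg CohSpace.web (h X)).symm q

/-- `G` acts on embeddings the way `∀(F)` does: normal forms are transported by
keeping the bound variables and substituting along `ι` on the free ones. -/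
def ForallAction {n : ℕ} (F : CohTuple (n + 1) ⥤ CohSpace) (G : CohTuple n ⥤ CohSpace)
    (hobj : ∀ X, G.obj X = Tr (partialApp F X)) : Prop :=
  ∀ (X Y : CohTuple n) (ι : X ⟶ Y) (c : CanonNF (partialApp F X)),
    ∃ c' : CanonNF (partialApp F Y),
      (G.map ι).toFun (trWebCast hobj X (Quotient.mk (traceSetoid _) c))
          = trWebCast hobj Y (Quotient.mk (traceSetoid _) c') ∧
        c'.1 = c.1 ∧
        HEq c'.2.1 ((F.map (extHomPi ι (canonTuple c.1))).toFun c.2.1)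

/-- `G` is (a presentation of) the functor `∀(F)`. -/
def IsForallExtension {n : ℕ} (F : CohTuple (n + 1) ⥤ CohSpace)
    (G : CohTuple n ⥤ CohSpace) : Prop :=
  ∃ hobj : ∀ X, G.obj X = Tr (partialApp F X), ForallAction F G hobj

/-- The uniform family of cliques obtained by instantiating a clique of the trace. -/
def instFam {n : ℕ} (F : CohTuple n ⥤ CohSpace) (c : Set (Tr F).web) :
    ∀ X : CohTuple n, Set (F.obj X).web := fun X =>
  { x | ∃ (d : CanonNF F) (ι : canonTuple d.1 ⟶ X),
      Quotient.mk (traceSetoid F) d ∈ c ∧ (F.map ι).toFun d.2.1 = x }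

/-!
A morphism `u : (W, w) ⟶ ((Y⃗, V), x)` in `El(|F|)` is a pair of embeddings: a free part
`ρ₀ : (W₁, …, Wₙ) ↪ Y⃗` and a bound part `σ₀ : W_{n+1} ↪ V`. As `x` is a normal form of
`F(Y⃗, −)`, `σ₀` has a unique section `σ` compatible with the elements. Since `F` preserves the
pullback square obtained by substituting `ρ₀` in the free and `σ` in the bound variable, `x`
comes from a normal form `t` of `F(W₁, …, Wₙ, −)`, whose class in `∀(F)(W₁, …, Wₙ)` is sent to
the class of `x` by `∀(F)(ρ₀)`. As that class is a normal form of `∀(F)`, `ρ₀` has a unique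
compatible section `ρ`, and `(ρ, σ)` is the unique section of `u`.
-/

lemma CategoryTheory.Functor.map_comp_toFun {C : Type*} [Category C] (F : C ⥤ CohSpace)
    {X Y Z : C} (f : X ⟶ Y) (g : Y ⟶ Z) (x : (F.obj X).web) :
    (F.map (f ≫ g)).toFun x = (F.map g).toFun ((F.map f).toFun x) := by
  rw [F.map_comp]
  rfl

lemma CategoryTheory.Functor.map_id_toFun {C : Type*} [Category C] (F : C ⥤ CohSpace) (X : C)
    (x : (F.obj X).web) : (F.map (𝟙 X)).toFun x = x := by
  rw [F.map_id]
  rfl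

def CohSpace.point {A : CohSpace} (a : A.web) : oneCoh ⟶ A :=
  ⟨fun _ => a, fun _ _ _ => rfl, fun _ _ => iff_of_true trivial (A.refl a)⟩

lemma CategoryTheory.IsPullback.exists_web_lift {P X Y Z : CohSpace} {fst : P ⟶ X}
    {snd : P ⟶ Y} {f : X ⟶ Z} {g : Y ⟶ Z} (h : IsPullback fst snd f g) (x : X.web) (y : Y.web)
    (hxy : f.toFun x = g.toFun y) : ∃ p, fst.toFun p = x ∧ snd.toFun p = y := by
  have hw : CohSpace.point x ≫ f = CohSpace.point y ≫ g := CohEmb.ext (funext fun _ => hxy)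
  exact ⟨(h.lift _ _ hw).toFun PUnit.unit,
    congrArg (fun k : oneCoh ⟶ X => k.toFun PUnit.unit) (h.lift_fst _ _ hw),
    congrArg (fun k : oneCoh ⟶ Y => k.toFun PUnit.unit) (h.lift_snd _ _ hw)⟩

lemma CategoryTheory.Pi.isPullback_of_forall {I : Type*} {C : I → Type*} [∀ i, Category (C i)]
    {P X Y Z : ∀ i, C i} {fst : P ⟶ X} {snd : P ⟶ Y} {f : X ⟶ Z} {g : Y ⟶ Z}
    (h : ∀ i, IsPullback (fst i) (snd i) (f i) (g i)) : IsPullback fst snd f g :=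
  IsPullback.of_isLimit' ⟨funext fun i => (h i).w⟩ <|
    PullbackCone.IsLimit.mk _
      (fun s i => (h i).lift (s.fst i) (s.snd i) (congrFun s.condition i))
      (fun s => funext fun i => (h i).lift_fst ..)
      (fun s => funext fun i => (h i).lift_snd ..)
      (fun s m hm₁ hm₂ => funext fun i =>
        (h i).hom_ext (by simp [← hm₁]) (by simp [← hm₂]))

section Extend

variable {n : ℕ}

abbrev extend (Y : CohTuple n) : CohTuple 1 ⥤ CohTuple (n + 1) := Functor.pi' (gfam Y)

lemma CohTuple.hom_ext {X Y : CohTuple (n + 1)} {f g : X ⟶ Y}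
    (h : ∀ j : Fin n, f j.castSucc = g j.castSucc) (hlast : f (Fin.last n) = g (Fin.last n)) :
    f = g := by
  funext i
  induction i using Fin.lastCases with
  | last => exact hlast
  | cast j => exact h j

lemma gfam_castSucc (Y : CohTuple n) (j : Fin n) :
    gfam Y j.castSucc = (Functor.const (CohTuple 1)).obj (Y j) := by
  simp [gfam]

lemma gfam_last (Y : CohTuple n) :
    gfam Y (Fin.last n) = Pi.eval (fun _ : Fin 1 => CohSpace) 0 := by
  simp [gfam]

lemma extend_obj_castSucc (Y : CohTuple n) (V : CohTuple 1) (j : Fin n) :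
    (extend Y).obj V j.castSucc = Y j :=
  Functor.congr_obj (gfam_castSucc Y j) V

lemma extend_obj_last (Y : CohTuple n) (V : CohTuple 1) (i : Fin 1) :
    (extend Y).obj V (Fin.last n) = V i := by
  rw [Fin.fin_one_eq_zero i]
  exact Functor.congr_obj (gfam_last Y) V

lemma extend_map_castSucc (Y : CohTuple n) {V V' : CohTuple 1} (τ : V ⟶ V') (j : Fin n) :
    (extend Y).map τ j.castSucc =
      eqToHom ((extend_obj_castSucc Y V j).trans (extend_obj_castSucc Y V' j).symm) :=
  (Functor.congr_hom (gfam_castSucc Y j) τ).trans (by simp; rfl)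

lemma extend_map_last (Y : CohTuple n) {V V' : CohTuple 1} (τ : V ⟶ V') (i : Fin 1) :
    (extend Y).map τ (Fin.last n) =
      eqToHom (extend_obj_last Y V i) ≫ τ i ≫ eqToHom (extend_obj_last Y V' i).symm := by
  rw [Fin.fin_one_eq_zero i]
  exact Functor.congr_hom (gfam_last Y) τ

lemma extHomPi_castSucc {X Y : CohTuple n} (ι : X ⟶ Y) (V : CohTuple 1) (j : Fin n) :
    extHomPi ι V j.castSucc =
      eqToHom (extend_obj_castSucc X V j) ≫ ι j ≫ eqToHom (extend_obj_castSucc Y V j).symm := by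
  refine (conj_eqToHom_iff_heq _ _ _ (extend_obj_castSucc Y V j)).2 ?_
  simp only [extHomPi, extHom, eq_mpr_eq_cast]
  rw [dif_pos (show ((j.castSucc : Fin (n + 1)) : ℕ) < n from j.isLt)]
  exact cast_heq _ _

lemma extHomPi_last {X Y : CohTuple n} (ι : X ⟶ Y) (V : CohTuple 1) :
    extHomPi ι V (Fin.last n) =
      eqToHom ((extend_obj_last X V 0).trans (extend_obj_last Y V 0).symm) := by
  have h : extHomPi ι V (Fin.last n) ≍ 𝟙 (V 0) := by
    simp only [extHomPi, extHom, eq_mpr_eq_cast]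
    rw [dif_neg (by simp)]
    exact cast_heq _ _
  rw [(conj_eqToHom_iff_heq _ _ (extend_obj_last X V 0) (extend_obj_last Y V 0)).2 h]
  simp

lemma extHomPi_naturality {X Y : CohTuple n} (ι : X ⟶ Y) {V V' : CohTuple 1} (τ : V ⟶ V') :
    extHomPi ι V ≫ (extend Y).map τ = (extend X).map τ ≫ extHomPi ι V' := by
  refine CohTuple.hom_ext (fun j => ?_) ?_ <;>
    simp only [Pi.comp_apply, extHomPi_castSucc, extHomPi_last, extend_map_castSucc,
      extend_map_last _ _ 0] <;> simp

lemma extHomPi_id (X : CohTuple n) (V : CohTuple 1) : extHomPi (𝟙 X) V = 𝟙 _ := by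
  refine CohTuple.hom_ext (fun j => ?_) ?_ <;>
    simp only [Pi.id_apply, extHomPi_castSucc, extHomPi_last] <;> simp

lemma extHomPi_comp {X Y Z : CohTuple n} (ι : X ⟶ Y) (κ : Y ⟶ Z) (V : CohTuple 1) :
    extHomPi (ι ≫ κ) V = extHomPi ι V ≫ extHomPi κ V := by
  refine CohTuple.hom_ext (fun j => ?_) ?_ <;>
    simp only [Pi.comp_apply, extHomPi_castSucc, extHomPi_last] <;> simp

variable (n) in
abbrev extendFunctor : CohTuple n × CohTuple 1 ⥤ CohTuple (n + 1) where
  obj p := (extend p.1).obj p.2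
  map f := extHomPi f.1 _ ≫ (extend _).map f.2
  map_id p := by simp [extHomPi_id]
  map_comp f g := by
    simp only [prod_comp, extHomPi_comp, Functor.map_comp, Category.assoc]
    rw [reassoc_of% extHomPi_naturality]

lemma extendFunctor_map {p q : CohTuple n × CohTuple 1} (f : p ⟶ q) :
    (extendFunctor n).map f = extHomPi f.1 p.2 ≫ (extend q.1).map f.2 := rfl

def extendFunctor.fullyFaithful : (extendFunctor n).FullyFaithful where
  preimage {p q} g :=
    (fun j => eqToHom (extend_obj_castSucc p.1 p.2 j).symm ≫ g j.castSucc ≫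
        eqToHom (extend_obj_castSucc q.1 q.2 j),
      fun i => eqToHom (extend_obj_last p.1 p.2 i).symm ≫ g (Fin.last n) ≫
        eqToHom (extend_obj_last q.1 q.2 i))
  map_preimage g := by
    refine CohTuple.hom_ext (fun j => ?_) ?_ <;>
      simp only [Pi.comp_apply, extHomPi_castSucc, extHomPi_last, extend_map_castSucc,
        extend_map_last _ _ 0] <;> simp
  preimage_map f := by
    refine Prod.ext (funext fun j => ?_) (funext fun i => ?_)
    · simp only [Pi.comp_apply, extHomPi_castSucc, extend_map_castSucc]
      simp
    · simp only [Pi.comp_apply, extHomPi_last, extend_map_last _ _ i]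
      simp

lemma extendFunctor_obj_split (W : CohTuple (n + 1)) :
    (extendFunctor n).obj (fun j => W j.castSucc, fun _ => W (Fin.last n)) = W := by
  funext i
  induction i using Fin.lastCases with
  | last => exact extend_obj_last _ _ 0
  | cast j => exact extend_obj_castSucc _ _ j

lemma isPullback_extHomPi {X Y : CohTuple n} (ι : X ⟶ Y) {V V' : CohTuple 1} (τ : V ⟶ V') :
    IsPullback (extHomPi ι V) ((extend X).map τ) ((extend Y).map τ) (extHomPi ι V') := by
  have sq : ∀ i, CommSq (extHomPi ι V i) ((extend X).map τ i) ((extend Y).map τ i)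
      (extHomPi ι V' i) := fun i => ⟨congrFun (extHomPi_naturality ι τ) i⟩
  refine Pi.isPullback_of_forall fun i => ?_
  induction i using Fin.lastCases with
  | last =>
    have := sq (Fin.last n)
    rw [extHomPi_last, extHomPi_last] at this ⊢
    exact IsPullback.of_horiz_isIso this
  | cast j =>
    have := sq j.castSucc
    rw [extend_map_castSucc, extend_map_castSucc] at this ⊢
    exact IsPullback.of_vert_isIso this

end Extend

section NormalForm

variable {m : ℕ} {F : CohTuple m ⥤ CohSpace}

lemma isNormalForm_mk_iff {X : CohTuple m} {x : (F.obj X).web} :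
    IsNormalForm (F := F) ⟨X, x⟩ ↔ (∀ i, Finite (X i).web) ∧
      ∀ (W : CohTuple m) (w : (F.obj W).web) (u : W ⟶ X), (F.map u).toFun w = x →
        ∃! v : X ⟶ W, v ≫ u = 𝟙 X ∧ (F.map v).toFun x = w := by
  refine and_congr_right fun _ => ⟨fun h W w u hu => ?_, fun h f u => ?_⟩
  · obtain ⟨v, hv, huniq⟩ := h ⟨W, w⟩ ⟨u, hu⟩
    exact ⟨v.1, ⟨congrArg Subtype.val hv, v.2⟩,
      fun v' hv' => congrArg Subtype.val (huniq ⟨v', hv'.2⟩ (Subtype.ext hv'.1))⟩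
  · obtain ⟨v, ⟨hv, hvw⟩, huniq⟩ := h f.1 f.2 u.1 u.2
    exact ⟨⟨v, hvw⟩, Subtype.ext hv,
      fun v' hv' => Subtype.ext (huniq v'.1 ⟨congrArg Subtype.val hv', v'.2⟩)⟩

lemma existsUnique_section_of_eq {W W' E : CohTuple m} (h : W' = W) {u : W ⟶ E}
    {x : (F.obj E).web} {w : (F.obj W).web}
    (H : ∃! v : E ⟶ W', v ≫ eqToHom h ≫ u = 𝟙 E ∧
      (F.map v).toFun x = (F.map (eqToHom h.symm)).toFun w) :
    ∃! v : E ⟶ W, v ≫ u = 𝟙 E ∧ (F.map v).toFun x = w := by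
  subst h
  simpa only [eqToHom_refl, Category.id_comp, F.map_id_toFun] using H

end NormalForm

section Restrict

variable {n : ℕ} (F : CohTuple (n + 1) ⥤ CohSpace) {X Y : CohTuple n} (ι : X ⟶ Y)

lemma extHomPi_naturality_apply {V V' : CohTuple 1} (τ : V ⟶ V')
    (w : ((partialApp F X).obj V).web) :
    (F.map (extHomPi ι V')).toFun (((partialApp F X).map τ).toFun w) =
      ((partialApp F Y).map τ).toFun ((F.map (extHomPi ι V)).toFun w) := by
  change (F.map ((extend X).map τ) ≫ F.map (extHomPi ι V')).toFun w =
    (F.map (extHomPi ι V) ≫ F.map ((extend Y).map τ)).toFun w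
  rw [← F.map_comp, ← F.map_comp, extHomPi_naturality]

lemma isNormalForm_of_map_extHomPi {V : CohTuple 1} {t : ((partialApp F X).obj V).web}
    (h : IsNormalForm (F := partialApp F Y) ⟨V, (F.map (extHomPi ι V)).toFun t⟩) :
    IsNormalForm (F := partialApp F X) ⟨V, t⟩ := by
  replace h := isNormalForm_mk_iff.1 h
  refine isNormalForm_mk_iff.2 ⟨h.1, fun W w u hu => ?_⟩
  obtain ⟨v, ⟨hv, hvw⟩, huniq⟩ :=
    h.2 W ((F.map (extHomPi ι W)).toFun w) u (by rw [← extHomPi_naturality_apply, hu])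
  refine ⟨v, ⟨hv, (F.map (extHomPi ι W)).inj ?_⟩, fun v' hv' => huniq v' ⟨hv'.1, ?_⟩⟩
  · rwa [extHomPi_naturality_apply]
  · rw [← extHomPi_naturality_apply, hv'.2]

lemma nfCoherent_of_map_extHomPi {V V' : CohTuple 1} {t : ((partialApp F X).obj V).web}
    {s : ((partialApp F X).obj V').web}
    (h : NFCoherent (F := partialApp F Y) ⟨V, (F.map (extHomPi ι V)).toFun t⟩
      ⟨V', (F.map (extHomPi ι V')).toFun s⟩) :
    NFCoherent (F := partialApp F X) ⟨V, t⟩ ⟨V', s⟩ := fun Z a b =>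
  ((F.map (extHomPi ι Z)).coh_iff _ _).2 <| by
    rw [extHomPi_naturality_apply, extHomPi_naturality_apply]
    exact h Z a b

def CanonNF.restrict (c : CanonNF (partialApp F Y))
    (t : ((partialApp F X).obj (canonTuple c.1)).web)
    (ht : (F.map (extHomPi ι _)).toFun t = c.2.1) : CanonNF (partialApp F X) :=
  ⟨c.1, t, isNormalForm_of_map_extHomPi F ι (by rw [ht]; exact c.2.2.1),
    nfCoherent_of_map_extHomPi F ι (by rw [ht]; exact c.2.2.2)⟩

lemma ForallAction.exists_map_eq {G : CohTuple n ⥤ CohSpace}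
    {hobj : ∀ X, G.obj X = Tr (partialApp F X)} (hact : ForallAction F G hobj)
    {c : CanonNF (partialApp F Y)} {q : (G.obj Y).web}
    (hc : trWebCast hobj Y (Quotient.mk _ c) = q)
    (t : ((partialApp F X).obj (canonTuple c.1)).web)
    (ht : (F.map (extHomPi ι _)).toFun t = c.2.1) : ∃ q', (G.map ι).toFun q' = q := by
  obtain ⟨c', hc', h1, h2⟩ := hact X Y ι (c.restrict F ι t ht)
  dsimp only [CanonNF.restrict] at h1 h2
  obtain rfl : c' = c :=
    Sigma.ext h1 ((Subtype.heq_iff_coe_heq (by rw [h1]) (by rw [h1])).2 (h2.trans (heq_of_eq ht)))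
  exact ⟨_, hc'.trans hc⟩

lemma exists_map_extHomPi_eq [PreservesLimitsOfShape WalkingCospan F]
    {V V' : CohTuple 1} (x : ((partialApp F Y).obj V).web) (σ : V ⟶ V')
    (w : ((partialApp F X).obj V').web)
    (h : ((partialApp F Y).map σ).toFun x = (F.map (extHomPi ι V')).toFun w) :
    ∃ t, (F.map (extHomPi ι V)).toFun t = x :=
  let ⟨t, ht, _⟩ := ((isPullback_extHomPi ι σ).map F).exists_web_lift _ _ h
  ⟨t, ht⟩

end Restrict

theorem existsUnique_section_extendFunctor {n : ℕ} {F : CohTuple (n + 1) ⥤ CohSpace}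
    [PreservesLimitsOfShape WalkingCospan F] {G : CohTuple n ⥤ CohSpace}
    {Y : CohTuple n} {q : (G.obj Y).web} (hq : IsNormalForm (F := G) ⟨Y, q⟩)
    {V : CohTuple 1} {x : (F.obj ((extendFunctor n).obj (Y, V))).web}
    (hx : IsNormalForm (F := partialApp F Y) ⟨V, x⟩)
    (hlift : ∀ {X : CohTuple n} (ι : X ⟶ Y) (t : ((partialApp F X).obj V).web),
      (F.map (extHomPi ι V)).toFun t = x → ∃ q', (G.map ι).toFun q' = q)
    {p : CohTuple n × CohTuple 1} (w : (F.obj ((extendFunctor n).obj p)).web)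
    (u : (extendFunctor n).obj p ⟶ (extendFunctor n).obj (Y, V)) (hu : (F.map u).toFun w = x) :
    ∃! v, v ≫ u = 𝟙 _ ∧ (F.map v).toFun x = w := by
  have hff := extendFunctor.fullyFaithful (n := n)
  obtain ⟨⟨ρ₀, σ₀⟩, rfl⟩ := hff.map_surjective u
  obtain ⟨σ, ⟨hσ, hσw⟩, hσuniq⟩ := (isNormalForm_mk_iff.1 hx).2 p.2
    ((F.map (extHomPi ρ₀ p.2)).toFun w) σ₀ ((F.map_comp_toFun _ _ w).symm.trans hu)
  obtain ⟨t, ht⟩ := exists_map_extHomPi_eq F ρ₀ x σ w hσw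
  obtain ⟨q', hq'⟩ := hlift ρ₀ t ht
  obtain ⟨ρ, ⟨hρ, -⟩, hρuniq⟩ := (isNormalForm_mk_iff.1 hq).2 p.1 q' ρ₀ hq'
  have hsec : (extendFunctor n).map (ρ, σ) ≫ (extendFunctor n).map (ρ₀, σ₀) = 𝟙 _ := by
    rw [← Functor.map_comp, prod_comp, hρ, hσ]
    exact (extendFunctor n).map_id _
  refine ⟨(extendFunctor n).map (ρ, σ), ⟨hsec, ?_⟩, ?_⟩
  · apply (F.map ((extendFunctor n).map (ρ₀, σ₀))).inj
    rw [hu, ← F.map_comp_toFun, hsec, F.map_id_toFun]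
  rintro v ⟨hv, hvw⟩
  obtain ⟨⟨ρ', σ'⟩, rfl⟩ := hff.map_surjective v
  have hv' : (extendFunctor n).map ((ρ', σ') ≫ (ρ₀, σ₀)) = (extendFunctor n).map (𝟙 _) := by
    rw [Functor.map_comp, (extendFunctor n).map_id]
    exact hv
  obtain ⟨hρ', hσ'⟩ : ρ' ≫ ρ₀ = 𝟙 _ ∧ σ' ≫ σ₀ = 𝟙 _ := Prod.ext_iff.1 (hff.map_injective hv')
  have hbound : (extendFunctor n).map (ρ', σ') ≫ extHomPi ρ₀ p.2 = (extend Y).map σ' := by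
    rw [extendFunctor_map, Category.assoc, ← extHomPi_naturality, ← Category.assoc,
      ← extHomPi_comp, hρ', extHomPi_id, Category.id_comp]
  obtain rfl : σ' = σ := hσuniq σ' ⟨hσ', by
    rw [← hvw, ← F.map_comp_toFun, hbound]
    rfl⟩
  obtain rfl : ρ' = ρ := hρuniq ρ' ⟨hρ', (G.map ρ₀).inj (by
    rw [← G.map_comp_toFun, hρ', G.map_id_toFun, hq'])⟩
  rfl

theorem stmt16_general {n : ℕ} (F : CohTuple (n + 1) ⥤ CohSpace) (hF : IsNormalFunctor F)
    (G : CohTuple n ⥤ CohSpace)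
    (hobj : ∀ X, G.obj X = Tr (partialApp F X)) (hact : ForallAction F G hobj)
    (e : Elts G) (he : IsNormalForm e) (c : CanonNF (partialApp F e.1))
    (hc : cast (congrArg CohSpace.web (hobj e.1)) e.2
        = Quotient.mk (traceSetoid (partialApp F e.1)) c) :
    IsNormalForm (F := F)
      ⟨(Functor.pi' (gfam e.1)).obj (canonTuple c.1), c.2.1⟩ := by
  have := hF.2
  have hc' : trWebCast hobj e.1 (Quotient.mk _ c) = e.2 := by
    rw [← hc]
    exact cast_cast _ _ _
  refine isNormalForm_mk_iff.2 ⟨fun i => ?_, fun W w u hu => ?_⟩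
  · induction i using Fin.lastCases with
    | last =>
      rw [extend_obj_last _ _ 0]
      exact inferInstanceAs (Finite (Fin _))
    | cast j =>
      rw [extend_obj_castSucc]
      exact he.1 j
  · refine existsUnique_section_of_eq (extendFunctor_obj_split W) ?_
    exact existsUnique_section_extendFunctor he c.2.2.1
      (fun ι t ht => hact.exists_map_eq F ι hc' t ht) _ _
      (by simpa only [← F.map_comp_toFun, eqToHom_trans_assoc, eqToHom_refl, Category.id_comp]
        using hu)

theorem stmt16 {n : ℕ} (F : CohTuple (n + 1) ⥤ CohSpace) (hF : IsNormalFunctor F)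
    (G : CohTuple n ⥤ CohSpace) (hG : IsNormalFunctor G)
    (hobj : ∀ X, G.obj X = Tr (partialApp F X)) (hact : ForallAction F G hobj)
    (e : Elts G) (he : IsNormalForm e) (c : CanonNF (partialApp F e.1))
    (hc : cast (congrArg CohSpace.web (hobj e.1)) e.2
        = Quotient.mk (traceSetoid (partialApp F e.1)) c) :
    IsNormalForm (F := F)
      ⟨(Functor.pi' (gfam e.1)).obj (canonTuple c.1), c.2.1⟩ :=
  stmt16_general F hF G hobj hact e he c hc
end
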